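/- Let q be a prime power, m,k positive integers with k ≥ 2, and s ∈ {1,…,m−1} with gcd(s,m) = δ < m. Then there exists a nonzero form p ∈ F_s such that the set Z̃_p := { α^{[s]} − α : α ∈ F_{q^m}^k and p vanishes on α + F_{q^δ}^k } has cardinality exactly q^{(k−2)(m−δ)}; i.e., the upper bound |Z̃_p| ≤ q^{(k−2)(m−δ)} is attained (for instance via the vectors γe_1,…,γe_{k−2} with γ ∈ F_{q^m}∖F_{q^δ} and e_i the standard basis vectors). -/

import Mathlib

open MvPolynomial

/-- The space `F_s`: the `F_{q^m}`-span of the forms `x_i^Q x_j - x_i x_j^Q` for `i < j`,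
where `Q = q^s`. -/
noncomputable def formSpace (Fqm : Type) [Field Fqm] (k Q : ℕ) :
    Submodule Fqm (MvPolynomial (Fin k) Fqm) :=
  Submodule.span Fqm {p | ∃ i j : Fin k, i < j ∧
    p = X i ^ Q * X j - X i * X j ^ Q}

/-- The coset `α + F₀^k` inside `F^k`, where `F₀` is a subfield of `F`. -/
def coset (F₀ F : Type) [Field F₀] [Field F] [Algebra F₀ F] {k : ℕ}
    (α : Fin k → F) : Set (Fin k → F) :=
  {v | ∃ a : Fin k → F₀, v = α + fun i => algebraMap F₀ F (a i)}

/-- The set `Z̃_p` of vectors `α^{[s]} - α`, for `α` ranging over the vectors whose coset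
`α + F₀^k` is contained in the zero locus of `p`. -/
def Ztilde (F₀ F : Type) [Field F₀] [Field F] [Algebra F₀ F] {k : ℕ}
    (Q : ℕ) (p : MvPolynomial (Fin k) F) : Set (Fin k → F) :=
  {w | ∃ α : Fin k → F, (∀ v ∈ coset F₀ F α, eval v p = 0) ∧
    w = fun j => α j ^ Q - α j}

lemma aux_pow_mul_fixed {F : Type*} [Field F] (q a : ℕ) (z : F)
    (h : z ^ q ^ a = z) : ∀ c, z ^ q ^ (a * c) = z := by
  intro c
  induction c with
  | zero => simp
  | succ c ih =>
      have : q ^ (a * (c + 1)) = q ^ (a * c) * q ^ a := by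
        rw [← pow_add]; ring_nf
      rw [this, pow_mul, ih, h]

lemma aux_gcd_fixed {F : Type*} [Field F] (q : ℕ)
    (hinj : ∀ t, Function.Injective fun z : F => z ^ q ^ t) :
    ∀ s m : ℕ, ∀ z : F, z ^ q ^ s = z → z ^ q ^ m = z → z ^ q ^ Nat.gcd s m = z := by
  intro s m
  induction s, m using Nat.gcd.induction with
  | H0 n => intro z h1 h2; simpa using h2
  | H1 a b ha IH =>
      intro z h1 h2
      rw [Nat.gcd_rec]
      refine IH z ?_ h1
      have hmul : z ^ q ^ (a * (b / a)) = z := aux_pow_mul_fixed q a z h1 _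
      have key : (fun w : F => w ^ q ^ (a * (b / a))) (z ^ q ^ (b % a))
          = (fun w : F => w ^ q ^ (a * (b / a))) z := by
        simp only
        rw [← pow_mul, ← pow_add, Nat.mod_add_div, h2, hmul]
      exact hinj _ key

theorem statement_17
    (q m k s δ : ℕ) (hqp : IsPrimePow q) (hm : 0 < m) (hk : 2 ≤ k)
    (hs1 : 1 ≤ s) (hs2 : s ≤ m - 1) (hδ : δ = Nat.gcd s m) (hδm : δ < m)
    (Fq Fqd Fqm : Type) [Field Fq] [Fintype Fq] [Field Fqd] [Field Fqm]
    [Algebra Fq Fqd] [Algebra Fqd Fqm] [Algebra Fq Fqm] [IsScalarTower Fq Fqd Fqm]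
    (hq : Fintype.card Fq = q)
    (hd : Module.finrank Fq Fqd = δ) (hdeg : Module.finrank Fq Fqm = m) :
    ∃ p ∈ formSpace Fqm k (q ^ s), p ≠ 0 ∧
      Nat.card (Ztilde Fqd Fqm (q ^ s) p) = q ^ ((k - 2) * (m - δ)) := by
  classical
  obtain ⟨p, e, hpP, he, hpe⟩ := hqp
  have hp : p.Prime := Nat.prime_iff.mpr hpP
  haveI : Fact p.Prime := ⟨hp⟩
  have hq2 : 2 ≤ q := by
    calc 2 ≤ p := hp.two_le
    _ ≤ p ^ e := Nat.le_self_pow he.ne' p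
    _ = q := hpe
  have hδpos : 0 < δ := by
    rw [hδ]; exact Nat.gcd_pos_of_pos_left m hs1
  have hδs : δ ∣ s := hδ ▸ Nat.gcd_dvd_left s m
  have hδle : δ ≤ m := hδm.le
  -- finiteness
  haveI : FiniteDimensional Fq Fqm := .of_finrank_pos (by rw [hdeg]; exact hm)
  haveI : FiniteDimensional Fq Fqd := .of_finrank_pos (by rw [hd]; exact hδpos)
  haveI : Finite Fqm := Module.finite_of_finite Fq
  haveI : Finite Fqd := Module.finite_of_finite Fq
  haveI : Fintype Fqm := Fintype.ofFinite Fqm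
  haveI : Fintype Fqd := Fintype.ofFinite Fqd
  have hcm : Fintype.card Fqm = q ^ m := by
    rw [Module.card_eq_pow_finrank (K := Fq) (V := Fqm), hq, hdeg]
  have hcd : Fintype.card Fqd = q ^ δ := by
    rw [Module.card_eq_pow_finrank (K := Fq) (V := Fqd), hq, hd]
  -- characteristic
  obtain ⟨p', hcp'⟩ := CharP.exists Fqm
  obtain ⟨n, hp', hcard'⟩ := FiniteField.card Fqm p'
  have hpp' : p = p' := by
    have hdvd : p ∣ p' ^ (n : ℕ) := by
      rw [← hcard', hcm, ← hpe, ← pow_mul]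
      exact dvd_pow_self p (by positivity)
    exact ((Nat.prime_dvd_prime_iff_eq hp hp').mp (hp.dvd_of_dvd_pow hdvd))
  haveI : CharP Fqm p := hpp' ▸ hcp'
  -- Frobenius powers
  have hfrob : ∀ t : ℕ, ∀ x : Fqm, iterateFrobenius Fqm p (e * t) x = x ^ q ^ t := by
    intro t x
    rw [iterateFrobenius_def, pow_mul, hpe]
  have hinj : ∀ t, Function.Injective fun z : Fqm => z ^ q ^ t := by
    intro t
    have : (fun z : Fqm => z ^ q ^ t) = iterateFrobenius Fqm p (e * t) := by
      funext z; rw [hfrob]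
    rw [this]
    exact (iterateFrobenius Fqm p (e * t)).injective
  have hadd : ∀ (x y : Fqm), (x + y) ^ q ^ s = x ^ q ^ s + y ^ q ^ s := by
    intro x y
    rw [← hfrob, ← hfrob, ← hfrob, map_add]
  have hallm : ∀ z : Fqm, z ^ q ^ m = z := by
    intro z
    have := FiniteField.pow_card z
    rwa [hcm] at this
  have hgcd : ∀ z : Fqm, z ^ q ^ s = z → z ^ q ^ δ = z := by
    intro z hz
    have := aux_gcd_fixed q hinj s m z hz (hallm z)
    rwa [← hδ] at this
  -- the subfield S
  set A := algebraMap Fqd Fqm with hA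
  have hAd : ∀ a : Fqd, a ^ q ^ δ = a := by
    intro a
    have := FiniteField.pow_card a
    rwa [hcd] at this
  have hS1 : ∀ x ∈ Set.range A, x ^ q ^ s = x := by
    rintro x ⟨a, rfl⟩
    obtain ⟨c, hc⟩ := hδs
    rw [← map_pow]
    congr 1
    calc a ^ q ^ s = a ^ q ^ (δ * c) := by rw [hc]
    _ = a := aux_pow_mul_fixed q δ a (hAd a) c
  have h1q : 1 < q ^ δ := Nat.one_lt_pow hδpos.ne' hq2
  have hS2 : ∀ z : Fqm, z ^ q ^ s = z → z ∈ Set.range A := by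
    intro z hz
    have hzδ : z ^ q ^ δ = z := hgcd z hz
    set T : Finset Fqm := Finset.univ.filter (fun w => w ^ q ^ δ = w) with hT
    have hTcard : T.card ≤ q ^ δ := by
      have hsub : T ⊆ (Polynomial.X ^ q ^ δ - Polynomial.X : Polynomial Fqm).roots.toFinset := by
        intro w hw
        rw [hT, Finset.mem_filter] at hw
        rw [Multiset.mem_toFinset,
          Polynomial.mem_roots (FiniteField.X_pow_card_sub_X_ne_zero Fqm h1q)]
        simp only [Polynomial.IsRoot, Polynomial.eval_sub, Polynomial.eval_pow, Polynomial.eval_X]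
        rw [hw.2, sub_self]
      calc T.card ≤ _ := Finset.card_le_card hsub
      _ ≤ Multiset.card (Polynomial.X ^ q ^ δ - Polynomial.X : Polynomial Fqm).roots :=
          Multiset.toFinset_card_le _
      _ ≤ _ := Polynomial.card_roots' _
      _ = q ^ δ := FiniteField.X_pow_card_sub_X_natDegree_eq Fqm h1q
    have himsub : Finset.univ.image A ⊆ T := by
      intro w hw
      obtain ⟨a, _, rfl⟩ := Finset.mem_image.mp hw
      simp only [hT, Finset.mem_filter, Finset.mem_univ, true_and]
      rw [← map_pow, hAd]
    have himcard : (Finset.univ.image A).card = q ^ δ := by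
      rw [Finset.card_image_of_injective _ A.injective, Finset.card_univ, hcd]
    have hTeq : Finset.univ.image A = T :=
      Finset.eq_of_subset_of_card_le himsub (by rw [himcard]; exact hTcard)
    have hzT : z ∈ T := by simp [hT, hzδ]
    rw [← hTeq] at hzT
    obtain ⟨a, _, ha⟩ := Finset.mem_image.mp hzT
    exact ⟨a, ha⟩
  -- the additive map z ↦ z^{q^s} - z
  let ψ : Fqm →+* Fqm := iterateFrobenius Fqm p (e * s)
  let g : Fqm →+ Fqm := ψ.toAddMonoidHom - AddMonoidHom.id Fqm
  have hg : ∀ z : Fqm, g z = z ^ q ^ s - z := by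
    intro z
    have : ψ z = z ^ q ^ s := hfrob s z
    simp [g, this]
  have hker : ∀ z : Fqm, z ∈ g.ker ↔ z ∈ Set.range A := by
    intro z
    rw [AddMonoidHom.mem_ker, hg, sub_eq_zero]
    exact ⟨fun h => hS2 z h, fun h => hS1 z h⟩
  have hcardS : Nat.card (Set.range A) = q ^ δ := by
    rw [Nat.card_range_of_injective A.injective, Nat.card_eq_fintype_card, hcd]
  have hcardker : Nat.card g.ker = q ^ δ := by
    rw [← hcardS]
    exact Nat.card_congr (Equiv.subtypeEquivRight hker)
  have hcardrange : Nat.card g.range = q ^ (m - δ) := by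
    have h1 : Nat.card Fqm = Nat.card (Fqm ⧸ g.ker) * Nat.card g.ker :=
      AddSubgroup.card_eq_card_quotient_mul_card_addSubgroup g.ker
    have h2 : Nat.card (Fqm ⧸ g.ker) = Nat.card g.range :=
      Nat.card_congr (QuotientAddGroup.quotientKerEquivRange g).toEquiv
    rw [h2, hcardker, Nat.card_eq_fintype_card, hcm] at h1
    have hqm : q ^ m = q ^ (m - δ) * q ^ δ := by rw [← pow_add]; congr 1; omega
    rw [hqm] at h1
    exact (Nat.eq_of_mul_eq_mul_right (by positivity) h1.symm)
  have hcardR : Nat.card (Set.range (fun z : Fqm => z ^ q ^ s - z)) = q ^ (m - δ) := by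
    rw [← hcardrange]
    apply Nat.card_congr
    apply Equiv.subtypeEquivRight
    intro w
    constructor
    · rintro ⟨z, rfl⟩; exact ⟨z, (hg z)⟩
    · rintro ⟨z, hz⟩; exact ⟨z, by rw [hg] at hz; exact hz⟩
  -- the polynomial
  let i0 : Fin k := ⟨0, by omega⟩
  let i1 : Fin k := ⟨1, by omega⟩
  have hi01 : i0 ≠ i1 := by simp [i0, i1, Fin.ext_iff]
  have hne : i1 ≠ i0 := fun h => hi01 h.symm
  set pp : MvPolynomial (Fin k) Fqm := X i0 ^ (q ^ s) * X i1 - X i0 * X i1 ^ (q ^ s) with hpp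
  have heval : ∀ v : Fin k → Fqm,
      eval v pp = v i0 ^ q ^ s * v i1 - v i0 * v i1 ^ q ^ s := by
    intro v; simp [hpp]
  have hvan : ∀ α : Fin k → Fqm,
      (∀ v ∈ coset Fqd Fqm α, eval v pp = 0) ↔
        (α i0 ∈ Set.range A ∧ α i1 ∈ Set.range A) := by
    intro α
    constructor
    · intro h
      have inst : ∀ a : Fin k → Fqd,
          (α i0 + A (a i0)) ^ q ^ s * (α i1 + A (a i1))
            = (α i0 + A (a i0)) * (α i1 + A (a i1)) ^ q ^ s := by
        intro a
        have := h (α + fun i => A (a i)) ⟨a, rfl⟩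
        rw [heval] at this
        rw [← sub_eq_zero]
        simpa using this
      have e00 := inst 0
      simp only [Pi.zero_apply, map_zero, add_zero] at e00
      have e10 := inst (fun i => if i = i0 then 1 else 0)
      rw [show (if i0 = i0 then (1:Fqd) else 0) = 1 from if_pos rfl,
          show (if i1 = i0 then (1:Fqd) else 0) = 0 from if_neg hne,
          map_one, map_zero, add_zero, hadd, one_pow] at e10
      have e01 := inst (fun i => if i = i1 then 1 else 0)
      rw [show (if i0 = i1 then (1:Fqd) else 0) = 0 from if_neg hi01,
          show (if i1 = i1 then (1:Fqd) else 0) = 1 from if_pos rfl,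
          map_one, map_zero, add_zero, hadd, one_pow] at e01
      constructor
      · exact hS2 _ (by linear_combination e01 - e00)
      · exact hS2 _ (by linear_combination e00 - e10)
    · rintro ⟨⟨a0, ha0⟩, ⟨a1, ha1⟩⟩ v ⟨a, rfl⟩
      rw [heval]
      simp only [Pi.add_apply]
      have h0 : (α i0 + A (a i0)) ^ q ^ s = α i0 + A (a i0) := by
        rw [← ha0, ← map_add]; exact hS1 _ ⟨a0 + a i0, rfl⟩
      have h1 : (α i1 + A (a i1)) ^ q ^ s = α i1 + A (a i1) := by
        rw [← ha1, ← map_add]; exact hS1 _ ⟨a1 + a i1, rfl⟩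
      rw [h0, h1]
      ring
  have hv0 : ((i0 : Fin k) : ℕ) = 0 := rfl
  have hv1 : ((i1 : Fin k) : ℕ) = 1 := rfl
  -- existence of an element moved by Frobenius
  obtain ⟨γ, hγ⟩ : ∃ γ : Fqm, γ ∉ Set.range A := by
    by_contra hcon
    push_neg at hcon
    have huniv : (Set.range A) = Set.univ := Set.eq_univ_of_forall hcon
    rw [huniv, Nat.card_coe_set_eq, Set.ncard_univ, Nat.card_eq_fintype_card, hcm] at hcardS
    have hlt : q ^ δ < q ^ m := Nat.pow_lt_pow_right hq2 hδm
    omega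
  have hγQ : γ ^ q ^ s ≠ γ := fun h => hγ (hS2 γ h)
  refine ⟨pp, ?_, ?_, ?_⟩
  · exact Submodule.subset_span ⟨i0, i1, by simp [Fin.lt_def, hv0, hv1], rfl⟩
  · intro h0
    have heq := heval (fun j => if j = i1 then γ else 1)
    rw [h0, map_zero] at heq
    rw [if_neg hi01, if_pos rfl, one_pow, one_mul, one_mul] at heq
    exact hγQ (by linear_combination heq)
  · -- cardinality
    set f : Fqm → Fqm := fun z => z ^ q ^ s - z with hf
    set R : Set Fqm := Set.range f with hR
    set C : Fin k → Set Fqm := fun j => if (j : ℕ) < 2 then {0} else R with hC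
    have hZ : Ztilde Fqd Fqm (q ^ s) pp = Set.univ.pi C := by
      ext w
      constructor
      · rintro ⟨α, hα, rfl⟩
        obtain ⟨h0, h1⟩ := (hvan α).mp hα
        intro j _
        by_cases hj : (j : ℕ) < 2
        · have hj01 : j = i0 ∨ j = i1 := by
            have hj' : (j : ℕ) = 0 ∨ (j : ℕ) = 1 := by omega
            rcases hj' with h | h
            · exact Or.inl (Fin.ext (by rw [h, hv0]))
            · exact Or.inr (Fin.ext (by rw [h, hv1]))
          simp only [hC, if_pos hj, Set.mem_singleton_iff]
          rcases hj01 with rfl | rfl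
          · rw [hS1 _ h0, sub_self]
          · rw [hS1 _ h1, sub_self]
        · simp only [hC, if_neg hj]
          exact ⟨α j, rfl⟩
      · intro hw
        refine ⟨fun j => if (j : ℕ) < 2 then 0 else Function.invFun f (w j), ?_, ?_⟩
        · apply (hvan _).mpr
          constructor
          · show (if ((i0 : Fin k) : ℕ) < 2 then (0:Fqm) else Function.invFun f (w i0)) ∈ Set.range A
            rw [if_pos (by rw [hv0]; norm_num)]
            exact ⟨0, (map_zero A)⟩
          · show (if ((i1 : Fin k) : ℕ) < 2 then (0:Fqm) else Function.invFun f (w i1)) ∈ Set.range A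
            rw [if_pos (by rw [hv1]; norm_num)]
            exact ⟨0, (map_zero A)⟩
        · funext j
          by_cases hj : (j : ℕ) < 2
          · simp only [if_pos hj]
            have hwj : w j ∈ ({0} : Set Fqm) := by
              have := hw j (Set.mem_univ j)
              simpa only [hC, if_pos hj] using this
            rw [Set.mem_singleton_iff] at hwj
            rw [hwj, zero_pow (by positivity), sub_zero]
          · simp only [if_neg hj]
            have hwj : w j ∈ R := by
              have := hw j (Set.mem_univ j)
              simpa only [hC, if_neg hj] using this
            rw [hR] at hwj
            exact (Function.invFun_eq hwj).symm
    rw [hZ]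
    have hequiv : (Set.univ.pi C) ≃ (∀ j : Fin k, C j) :=
      { toFun := fun w j => ⟨w.1 j, w.2 j (Set.mem_univ j)⟩
        invFun := fun gg => ⟨fun j => (gg j).1, fun j _ => (gg j).2⟩
        left_inv := fun w => rfl
        right_inv := fun gg => rfl }
    rw [Nat.card_congr hequiv, Nat.card_pi]
    have hcardC : ∀ j : Fin k, Nat.card (C j) = if (j : ℕ) < 2 then 1 else q ^ (m - δ) := by
      intro j
      by_cases hj : (j : ℕ) < 2
      · simp only [hC, if_pos hj]
        simp
      · simp only [hC, if_neg hj]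
        exact hcardR
    calc (∏ j : Fin k, Nat.card (C j))
        = ∏ j : Fin k, (if ((j : Fin k) : ℕ) < 2 then 1 else q ^ (m - δ)) :=
          Finset.prod_congr rfl (fun j _ => hcardC j)
      _ = ∏ i ∈ Finset.range k, (if i < 2 then 1 else q ^ (m - δ)) :=
          Fin.prod_univ_eq_prod_range (fun i => if i < 2 then 1 else q ^ (m - δ)) k
      _ = q ^ ((k - 2) * (m - δ)) := by
          rw [Finset.prod_ite, Finset.prod_const_one, one_mul, Finset.prod_const]
          have hfil : (Finset.range k).filter (fun i => ¬ i < 2) = Finset.Ico 2 k := by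
            ext i
            simp only [Finset.mem_filter, Finset.mem_range, Finset.mem_Ico, not_lt]
            omega
          rw [hfil, Nat.card_Ico, ← pow_mul, Nat.mul_comm]
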